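/- Let n ≥ 1, let W(x,t) = (4πt)^{-n/2} e^{-|x|²/(4t)} for t > 0, E = {(x,t) : t > 0, W(x,t) ≥ 1}, and 𝓗(x,t) = (1/4) χ_E(x,t) |x|²/t². Then (1/(2n)) ∬_{ℝⁿ×ℝ} |y|² 𝓗(y,s) dy ds = σ(S^{n-1}) · n^{(n+2)/2} · Γ((n+6)/2) / ( (n+4) (n+2)^{(n+6)/2} π^{(n+2)/2} ), where σ(S^{n-1}) is the surface measure of the unit sphere in ℝⁿ and Γ is the Euler gamma function. -/

import Mathlib

open MeasureTheory Real

/-- The Weierstrass (Gauss–Weierstrass heat) kernel on `ℝⁿ`: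
`W(x,t) = (4πt)^{-n/2} e^{-|x|²/(4t)}` for `t > 0`. -/
noncomputable def weierstrassW (n : ℕ) (x : EuclideanSpace ℝ (Fin n)) (t : ℝ) : ℝ :=
  (4 * Real.pi * t) ^ (-(n : ℝ) / 2) * Real.exp (-‖x‖ ^ 2 / (4 * t))

/-- The parabolic mean value kernel for the heat equation:
`𝓗(x,t) = (1/4) |x|²/t²` on the unit heat ball `E = {(x,t) : t > 0, W(x,t) ≥ 1}`,
and `0` elsewhere. -/
noncomputable def heatMVKernel (n : ℕ) (p : EuclideanSpace ℝ (Fin n) × ℝ) : ℝ :=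
  if 0 < p.2 ∧ 1 ≤ weierstrassW n p.1 p.2 then (1 / 4) * ‖p.1‖ ^ 2 / p.2 ^ 2 else 0

/-- The surface measure `σ(S^{n-1})` of the unit sphere in `ℝⁿ`. -/
noncomputable def sphereSurfaceMeasure (n : ℕ) : ℝ :=
  (((volume : Measure (EuclideanSpace ℝ (Fin n))).toSphere) Set.univ).toReal

/-! ### Auxiliary material -/

lemma weierstrass_one_le_iff (n : ℕ) (x : EuclideanSpace ℝ (Fin n)) {t : ℝ} (ht : 0 < t) :
    1 ≤ weierstrassW n x t ↔ ‖x‖ ^ 2 ≤ 2 * n * t * Real.log (1 / (4 * Real.pi * t)) := by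
  have hpi := Real.pi_pos
  have h4 : 0 < 4 * Real.pi * t := by positivity
  have hW : 0 < weierstrassW n x t := by
    unfold weierstrassW; positivity
  rw [← Real.log_nonneg_iff hW, weierstrassW,
    Real.log_mul (by positivity) (Real.exp_ne_zero _), Real.log_rpow h4, Real.log_exp,
    one_div, Real.log_inv]
  have e : -(↑n : ℝ)/2 * Real.log (4*Real.pi*t) + -‖x‖^2/(4*t)
      = (2*↑n*t*(-Real.log (4*Real.pi*t)) - ‖x‖^2)/(4*t) := by
    field_simp; ring
  rw [e, le_div_iff₀ (by positivity : (0:ℝ) < 4*t), zero_mul, sub_nonneg]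

lemma heat_set_eq (n : ℕ) :
    {p : EuclideanSpace ℝ (Fin n) × ℝ | 0 < p.2 ∧ 1 ≤ weierstrassW n p.1 p.2}
      = {p : EuclideanSpace ℝ (Fin n) × ℝ |
          0 < p.2 ∧ ‖p.1‖ ^ 2 ≤ 2 * n * p.2 * Real.log (1 / (4 * Real.pi * p.2))} := by
  ext p
  exact and_congr_right fun h => weierstrass_one_le_iff n p.1 h

lemma measurableSet_heat (n : ℕ) :
    MeasurableSet {p : EuclideanSpace ℝ (Fin n) × ℝ | 0 < p.2 ∧ 1 ≤ weierstrassW n p.1 p.2} := by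
  rw [heat_set_eq, Set.setOf_and]
  refine (measurableSet_lt measurable_const measurable_snd).inter
    (measurableSet_le (measurable_fst.norm.pow_const 2) ?_)
  exact (measurable_const.mul measurable_snd).mul
    ((measurable_const.div (measurable_const.mul measurable_snd)).log)

lemma measurable_FF (n : ℕ) :
    Measurable (fun p : EuclideanSpace ℝ (Fin n) × ℝ => ‖p.1‖ ^ 2 * heatMVKernel n p) := by
  apply (measurable_fst.norm.pow_const 2).mul
  unfold heatMVKernel
  exact Measurable.ite (measurableSet_heat n)
    ((measurable_const.mul (measurable_fst.norm.pow_const 2)).div (measurable_snd.pow_const 2))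
    measurable_const

noncomputable def vBall (n : ℕ) : ℝ :=
  (volume (Metric.ball (0 : EuclideanSpace ℝ (Fin n)) 1)).toReal

noncomputable def cH : ℝ := 1/(4*Real.pi)

noncomputable def GH (n : ℕ) (s : ℝ) : ℝ :=
  ((n:ℝ) * vBall n / (4*((n:ℝ)+4))) *
    (2*(n:ℝ)*s*Real.log (1/(4*Real.pi*s))) ^ (((n:ℝ)+4)/2) / s^2

noncomputable def gFun (n : ℕ) (t : ℝ) : ℝ := Set.indicator (Set.Ioo 0 cH) (GH n) t

noncomputable def φH (u : ℝ) : ℝ := cH * Real.exp (-u)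

noncomputable def Vfin (n : ℕ) : ℝ :=
  ((n : ℝ) * vBall n / (4*((n:ℝ)+4)) * (2*(n:ℝ)*cH) ^ (((n:ℝ)+4)/2) / cH)
    * ((1/(((n:ℝ)+2)/2)) ^ (((n:ℝ)+6)/2) * Real.Gamma (((n:ℝ)+6)/2))

lemma radial (n : ℕ) (hn : 1 ≤ n) (t R : ℝ) (ht : 0 < t) (hR : 0 < R) :
    ∫ x : EuclideanSpace ℝ (Fin n),
        Set.indicator (Metric.closedBall (0:EuclideanSpace ℝ (Fin n)) R)
          (fun x => ‖x‖^4/(4*t^2)) x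
      = n * ((volume (Metric.ball (0:EuclideanSpace ℝ (Fin n)) 1)).toReal) *
          (R^(n+4)/(((n:ℝ)+4) * (4*t^2))) := by
  haveI : Nontrivial (EuclideanSpace ℝ (Fin n)) := by
      have : 0 < Module.finrank ℝ (EuclideanSpace ℝ (Fin n)) := by
        rw [finrank_euclideanSpace_fin]; omega
      exact Module.nontrivial_of_finrank_pos this
  have hptwise : ∀ x : EuclideanSpace ℝ (Fin n),
      Set.indicator (Metric.closedBall (0:EuclideanSpace ℝ (Fin n)) R) (fun x => ‖x‖^4/(4*t^2)) x
        = Set.indicator (Set.Icc 0 R) (fun r => r^4/(4*t^2)) ‖x‖ := by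
    intro x
    by_cases h : ‖x‖ ≤ R
    · rw [Set.indicator_of_mem (by simpa [Metric.mem_closedBall, dist_zero_right] using h),
        Set.indicator_of_mem (Set.mem_Icc.mpr ⟨norm_nonneg x, h⟩)]
    · rw [Set.indicator_of_notMem (by simpa [Metric.mem_closedBall, dist_zero_right] using h),
        Set.indicator_of_notMem (fun hc => h (Set.mem_Icc.mp hc).2)]
  simp_rw [hptwise]
  rw [MeasureTheory.integral_fun_norm_addHaar volume
    (fun r => Set.indicator (Set.Icc 0 R) (fun r => r^4/(4*t^2)) r)]
  rw [finrank_euclideanSpace_fin]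
  have hind : ∀ r : ℝ, r ^ (n-1) • Set.indicator (Set.Icc 0 R) (fun r => r^4/(4*t^2)) r
      = Set.indicator (Set.Icc 0 R) (fun r => r^(n+3)/(4*t^2)) r := by
    intro r
    by_cases h : r ∈ Set.Icc 0 R
    · rw [Set.indicator_of_mem h, Set.indicator_of_mem h, smul_eq_mul, ← mul_div_assoc,
        ← pow_add]
      congr 2
      omega
    · rw [Set.indicator_of_notMem h, Set.indicator_of_notMem h, smul_zero]
  simp_rw [hind]
  rw [MeasureTheory.setIntegral_indicator measurableSet_Icc]
  have hset : Set.Ioi (0:ℝ) ∩ Set.Icc 0 R = Set.Ioc 0 R := by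
    ext r
    simp only [Set.mem_inter_iff, Set.mem_Ioi, Set.mem_Icc, Set.mem_Ioc]
    exact ⟨fun ⟨h1, _, h3⟩ => ⟨h1, h3⟩, fun ⟨h1, h2⟩ => ⟨h1, h1.le, h2⟩⟩
  rw [hset]
  rw [MeasureTheory.integral_div, ← intervalIntegral.integral_of_le hR.le,
    integral_pow]
  rw [nsmul_eq_mul, smul_eq_mul]
  have : ((n:ℝ)+3+1) = (n:ℝ)+4 := by ring
  push_cast
  rw [this]
  have h4 : ((n:ℝ)+4) ≠ 0 := by positivity
  field_simp
  rw [measureReal_def]; ring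

lemma inner_lintegral (n : ℕ) (hn : 1 ≤ n) (t : ℝ) :
    ∫⁻ x : EuclideanSpace ℝ (Fin n), ENNReal.ofReal (‖x‖ ^ 2 * heatMVKernel n (x, t))
      = ENNReal.ofReal (gFun n t) := by
  have hpi := Real.pi_pos
  by_cases h : 0 < t ∧ t < 1/(4*Real.pi)
  · obtain ⟨ht, htc⟩ := h
    have hmem : t ∈ Set.Ioo 0 cH := by
      rw [cH]; exact ⟨ht, htc⟩
    have hlogpos : 0 < Real.log (1/(4*Real.pi*t)) := by
      apply Real.log_pos
      rw [lt_div_iff₀ (by positivity)]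
      rw [lt_div_iff₀ (by positivity)] at htc
      linarith
    have hn' : (1:ℝ) ≤ n := by exact_mod_cast hn
    set R2 : ℝ := 2*n*t*Real.log (1/(4*Real.pi*t)) with hR2def
    have hR2 : 0 < R2 := by positivity
    set R : ℝ := Real.sqrt R2 with hRdef
    have hR : 0 < R := Real.sqrt_pos.mpr hR2
    have hsq : R^2 = R2 := Real.sq_sqrt hR2.le
    have hpt : ∀ x : EuclideanSpace ℝ (Fin n), ‖x‖^2 * heatMVKernel n (x, t)
        = Set.indicator (Metric.closedBall (0:EuclideanSpace ℝ (Fin n)) R)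
            (fun x => ‖x‖^4/(4*t^2)) x := by
      intro x
      rw [heatMVKernel]
      by_cases hc : 0 < t ∧ 1 ≤ weierstrassW n x t
      · rw [if_pos hc]
        have hx2 : ‖x‖ ^ 2 ≤ R2 := (weierstrass_one_le_iff n x ht).mp hc.2
        have hxR : ‖x‖ ≤ R := (Real.le_sqrt (norm_nonneg x) hR2.le).mpr hx2
        rw [Set.indicator_of_mem (by simpa [Metric.mem_closedBall, dist_zero_right] using hxR)]
        field_simp
      · rw [if_neg hc]
        have hxR : ¬ ‖x‖ ≤ R := by
          intro hle
          apply hc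
          refine ⟨ht, (weierstrass_one_le_iff n x ht).mpr ?_⟩
          calc ‖x‖^2 ≤ R^2 := by nlinarith [norm_nonneg x]
          _ = R2 := hsq
        rw [Set.indicator_of_notMem
          (by simpa [Metric.mem_closedBall, dist_zero_right] using hxR)]
        ring
    simp_rw [hpt]
    have hintOn : IntegrableOn (fun x : EuclideanSpace ℝ (Fin n) => ‖x‖^4/(4*t^2))
        (Metric.closedBall 0 R) := by
      apply ContinuousOn.integrableOn_compact (isCompact_closedBall _ _)
      exact ((continuous_norm.pow 4).div_const _).continuousOn
    have hint : Integrable (fun x : EuclideanSpace ℝ (Fin n) =>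
        Set.indicator (Metric.closedBall (0:EuclideanSpace ℝ (Fin n)) R)
          (fun x => ‖x‖^4/(4*t^2)) x) := by
      rwa [integrable_indicator_iff Metric.isClosed_closedBall.measurableSet]
    have hnn : 0 ≤ᵐ[volume] (fun x : EuclideanSpace ℝ (Fin n) =>
        Set.indicator (Metric.closedBall (0:EuclideanSpace ℝ (Fin n)) R)
          (fun x => ‖x‖^4/(4*t^2)) x) := by
      filter_upwards with x
      exact Set.indicator_nonneg (fun y _ => by positivity) x
    rw [← MeasureTheory.ofReal_integral_eq_lintegral_ofReal hint hnn]
    rw [radial n hn t R ht hR]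
    congr 1
    rw [gFun, Set.indicator_of_mem hmem]
    have hpow : R^(n+4) = R2 ^ (((n:ℝ)+4)/2) := by
      rw [hRdef, Real.sqrt_eq_rpow, ← Real.rpow_natCast (R2 ^ (1/(2:ℝ))) (n+4),
        ← Real.rpow_mul hR2.le]
      congr 1
      push_cast
      ring
    rw [GH, hpow]
    unfold vBall
    have h4 : ((n:ℝ)+4) ≠ 0 := by positivity
    field_simp
    ring_nf
    rw [hR2def]; ring_nf
  · have hz : ∀ x : EuclideanSpace ℝ (Fin n), ‖x‖^2 * heatMVKernel n (x, t) = 0 := by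
      intro x
      rw [heatMVKernel]
      by_cases hc : 0 < t ∧ 1 ≤ weierstrassW n x t
      · obtain ⟨ht, hW⟩ := hc
        have hc' : 1/(4*Real.pi) ≤ t := by
          by_contra hlt
          exact h ⟨ht, lt_of_not_ge hlt⟩
        have hlog : Real.log (1/(4*Real.pi*t)) ≤ 0 := by
          apply Real.log_nonpos (by positivity)
          rw [div_le_one (by positivity)]
          rw [div_le_iff₀ (by positivity : (0:ℝ) < 4*Real.pi)] at hc'
          linarith
        have hx2 := (weierstrass_one_le_iff n x ht).mp hW
        have hx0 : ‖x‖^2 = 0 := le_antisymm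
          (hx2.trans (mul_nonpos_of_nonneg_of_nonpos (by positivity) hlog))
          (by positivity)
        rw [if_pos ⟨ht, hW⟩, hx0]
        ring
      · rw [if_neg hc]; ring
    simp only [hz, ENNReal.ofReal_zero, lintegral_const, zero_mul]
    rw [gFun, Set.indicator_of_notMem (by rw [cH]; simpa [Set.mem_Ioo] using h),
      ENNReal.ofReal_zero]

lemma cH_pos : 0 < cH := by unfold cH; positivity

lemma himg : φH '' Set.Ioi 0 = Set.Ioo 0 cH := by
  have hc := cH_pos
  ext y
  simp only [Set.mem_image, Set.mem_Ioi, Set.mem_Ioo, φH]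
  constructor
  · rintro ⟨u, hu, rfl⟩
    refine ⟨by positivity, ?_⟩
    have : Real.exp (-u) < 1 := Real.exp_lt_one_iff.mpr (by linarith)
    calc cH * Real.exp (-u) < cH * 1 := by nlinarith
    _ = cH := mul_one cH
  · rintro ⟨hy0, hyc⟩
    refine ⟨Real.log (cH/y), Real.log_pos ((one_lt_div hy0).mpr hyc), ?_⟩
    rw [← Real.log_inv, Real.exp_log (by positivity), inv_div]
    field_simp

lemma hderivH : ∀ u ∈ Set.Ioi (0:ℝ),
    HasDerivWithinAt φH (-(cH * Real.exp (-u))) (Set.Ioi 0) u := by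
  intro u _
  have h1 : HasDerivAt (fun u : ℝ => -u) (-1) u := (hasDerivAt_id u).neg
  have h2 : HasDerivAt (fun u : ℝ => Real.exp (-u)) (Real.exp (-u) * (-1)) u := h1.exp
  have h3 : HasDerivAt φH (cH * (Real.exp (-u) * (-1))) u := h2.const_mul cH
  rw [show -(cH * Real.exp (-u)) = cH * (Real.exp (-u) * (-1)) by ring]
  exact h3.hasDerivWithinAt

lemma hinjH : Set.InjOn φH (Set.Ioi 0) := by
  intro a _ b _ hab
  have h : Real.exp (-a) = Real.exp (-b) :=
    mul_left_cancel₀ (ne_of_gt cH_pos) hab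
  have := Real.exp_injective h
  linarith

lemma hptH (n : ℕ) (hn : 1 ≤ n) : ∀ u ∈ Set.Ioi (0:ℝ),
    |(-(cH * Real.exp (-u)))| • GH n (φH u)
      = (((n:ℝ) * vBall n / (4*((n:ℝ)+4))) * (2*(n:ℝ)*cH) ^ (((n:ℝ)+4)/2) / cH)
          * (u ^ (((n:ℝ)+4)/2) * Real.exp (-((((n:ℝ)+2)/2)*u))) := by
  intro u hu
  have hc := cH_pos
  have hu0 : (0:ℝ) < u := hu
  have hE : 0 < Real.exp (-u) := Real.exp_pos _
  have hn' : (1:ℝ) ≤ n := by exact_mod_cast hn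
  have habs : |(-(cH * Real.exp (-u)))| = cH * Real.exp (-u) := by
    rw [abs_neg, abs_of_pos (by positivity)]
  have hlog : Real.log (1/(4*Real.pi*(φH u))) = u := by
    have h1 : 4*Real.pi*(φH u) = Real.exp (-u) := by
      unfold φH cH
      field_simp
    rw [h1, one_div, ← Real.exp_neg, neg_neg, Real.log_exp]
  have hbase : 2*(n:ℝ)*(φH u)*Real.log (1/(4*Real.pi*(φH u)))
      = (2*(n:ℝ)*cH) * (Real.exp (-u) * u) := by
    rw [hlog]; unfold φH; ring
  have hsplit : ((2*(n:ℝ)*cH) * (Real.exp (-u) * u)) ^ (((n:ℝ)+4)/2)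
      = (2*(n:ℝ)*cH) ^ (((n:ℝ)+4)/2) * ((Real.exp (-u)) ^ (((n:ℝ)+4)/2) * u ^ (((n:ℝ)+4)/2)) := by
    rw [Real.mul_rpow (by positivity) (by positivity),
      Real.mul_rpow (by positivity) hu0.le]
  have hexpA : (Real.exp (-u)) ^ (((n:ℝ)+4)/2)
      = Real.exp (-((((n:ℝ)+2)/2)*u)) * Real.exp (-u) := by
    rw [← Real.exp_mul, ← Real.exp_add]
    congr 1
    ring
  rw [smul_eq_mul, habs]
  unfold GH
  rw [hbase, hsplit, hexpA]
  unfold φH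
  field_simp

lemma gFun_integral (n : ℕ) (hn : 1 ≤ n) :
    (∫ t, gFun n t) = Vfin n ∧ Integrable (gFun n) := by
  have hc := cH_pos
  have hr : (0:ℝ) < ((n:ℝ)+2)/2 := by positivity
  constructor
  · calc ∫ t, gFun n t = ∫ t in Set.Ioo 0 cH, GH n t := by
          unfold gFun
          rw [MeasureTheory.integral_indicator measurableSet_Ioo]
      _ = ∫ u in Set.Ioi 0, |(-(cH * Real.exp (-u)))| • GH n (φH u) := by
          rw [← himg, integral_image_eq_integral_abs_deriv_smul measurableSet_Ioi hderivH hinjH]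
      _ = ∫ u in Set.Ioi 0, (((n:ℝ) * vBall n / (4*((n:ℝ)+4))) * (2*(n:ℝ)*cH) ^ (((n:ℝ)+4)/2) / cH)
            * (u ^ (((n:ℝ)+4)/2) * Real.exp (-((((n:ℝ)+2)/2)*u))) :=
          setIntegral_congr_fun measurableSet_Ioi (hptH n hn)
      _ = (((n:ℝ) * vBall n / (4*((n:ℝ)+4))) * (2*(n:ℝ)*cH) ^ (((n:ℝ)+4)/2) / cH)
            * ∫ u in Set.Ioi 0, u ^ ((((n:ℝ)+6)/2) - 1) * Real.exp (-((((n:ℝ)+2)/2)*u)) := by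
          rw [MeasureTheory.integral_const_mul]
          congr 1
          apply setIntegral_congr_fun measurableSet_Ioi
          intro u _
          congr 2
          ring
      _ = Vfin n := by
          rw [integral_rpow_mul_exp_neg_mul_Ioi (by positivity) hr]
          unfold Vfin
          rfl
  · unfold gFun
    rw [integrable_indicator_iff measurableSet_Ioo]
    rw [show Set.Ioo (0:ℝ) cH = φH '' Set.Ioi 0 from himg.symm]
    rw [integrableOn_image_iff_integrableOn_abs_deriv_smul measurableSet_Ioi hderivH hinjH]
    have h0 : IntegrableOn (fun u : ℝ => u ^ (((n:ℝ)+4)/2) * Real.exp (-(((n:ℝ)+2)/2) * u ^ (1:ℝ)))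
        (Set.Ioi 0) :=
      integrableOn_rpow_mul_exp_neg_mul_rpow (by
        have : (0:ℝ) ≤ (n:ℝ) := Nat.cast_nonneg n
        linarith) one_pos hr
    have h1 : IntegrableOn (fun u : ℝ =>
        (((n:ℝ) * vBall n / (4*((n:ℝ)+4))) * (2*(n:ℝ)*cH) ^ (((n:ℝ)+4)/2) / cH)
          * (u ^ (((n:ℝ)+4)/2) * Real.exp (-((((n:ℝ)+2)/2)*u)))) (Set.Ioi 0) := by
      apply Integrable.const_mul
      simpa [Real.rpow_one, neg_mul] using h0.integrable
    exact h1.congr_fun (fun u hu => (hptH n hn u hu).symm) measurableSet_Ioi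

lemma final_alg (x v G : ℝ) (hx : 1 ≤ x) :
    (1/(2*x)) * ((x * v / (4*(x+4)) * (2*x*(1/(4*Real.pi))) ^ ((x+4)/2) / (1/(4*Real.pi)))
      * ((1/((x+2)/2)) ^ ((x+6)/2) * G))
    = (x*v) * x^((x+2)/2) * G / ((x+4)*(x+2)^((x+6)/2)*Real.pi^((x+2)/2)) := by
  have hpi := Real.pi_pos
  have hx0 : (0:ℝ) < x := by linarith
  have e1 : 2*x*(1/(4*Real.pi)) = x/(2*Real.pi) := by
    field_simp
    ring
  rw [e1, Real.div_rpow hx0.le (by positivity), one_div_div,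
    Real.div_rpow (by norm_num) (by linarith),
    Real.mul_rpow (by norm_num) hpi.le]
  have h22 : (2:ℝ)^(2:ℝ) = 4 := by
    rw [show (2:ℝ) = ((2:ℕ):ℝ) by norm_num, Real.rpow_natCast]
    norm_num
  have h2 : (2:ℝ)^((x+6)/2) = 2^((x+2)/2) * 4 := by
    rw [show (x+6)/2 = (x+2)/2 + 2 by ring, Real.rpow_add two_pos, h22]
  have hxp : x^((x+4)/2) = x^((x+2)/2) * x := by
    rw [show (x+4)/2 = (x+2)/2 + 1 by ring, Real.rpow_add hx0, Real.rpow_one]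
  have hpp : Real.pi^((x+4)/2) = Real.pi^((x+2)/2) * Real.pi := by
    rw [show (x+4)/2 = (x+2)/2 + 1 by ring, Real.rpow_add hpi, Real.rpow_one]
  have h2p : (2:ℝ)^((x+4)/2) = 2^((x+2)/2) * 2 := by
    rw [show (x+4)/2 = (x+2)/2 + 1 by ring, Real.rpow_add two_pos, Real.rpow_one]
  rw [h2, hxp, hpp, h2p]
  have n1 : Real.pi^((x+2)/2) ≠ 0 := by positivity
  have n2 : (2:ℝ)^((x+2)/2) ≠ 0 := by positivity
  have n3 : (x+2)^((x+6)/2) ≠ 0 := by positivity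
  have n4 : (x+4) ≠ 0 := by linarith
  have n5 : (x+2) ≠ 0 := by linarith
  field_simp
  ring

/-- **Explicit value of the normalized second space moment of the heat mean value kernel:**
`(1/(2n)) ∬ |y|² 𝓗(y,s) dy ds = σ(S^{n-1}) n^{(n+2)/2} Γ((n+6)/2) / ((n+4) (n+2)^{(n+6)/2} π^{(n+2)/2})`. -/
theorem heatMVKernel_space_moment_value (n : ℕ) (hn : 1 ≤ n) :
    (1 / (2 * (n : ℝ))) * ∫ p : EuclideanSpace ℝ (Fin n) × ℝ, ‖p.1‖ ^ 2 * heatMVKernel n p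
      = sphereSurfaceMeasure n * (n : ℝ) ^ (((n : ℝ) + 2) / 2) * Real.Gamma (((n : ℝ) + 6) / 2)
          / (((n : ℝ) + 4) * ((n : ℝ) + 2) ^ (((n : ℝ) + 6) / 2) * Real.pi ^ (((n : ℝ) + 2) / 2)) := by
  have hn' : (1:ℝ) ≤ n := by exact_mod_cast hn
  have hσ : sphereSurfaceMeasure n = (n : ℝ) * vBall n := by
    rw [sphereSurfaceMeasure, Measure.toSphere_apply_univ, ENNReal.toReal_mul,
      ENNReal.toReal_natCast, finrank_euclideanSpace_fin]
    rfl
  have hf_nn : 0 ≤ᵐ[volume] fun p : EuclideanSpace ℝ (Fin n) × ℝ =>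
      ‖p.1‖^2 * heatMVKernel n p := by
    filter_upwards with p
    unfold heatMVKernel
    split_ifs with h
    · positivity
    · simp
  have hmeas := measurable_FF n
  rw [MeasureTheory.integral_eq_lintegral_of_nonneg_ae hf_nn hmeas.aestronglyMeasurable]
  rw [MeasureTheory.Measure.volume_eq_prod]
  rw [MeasureTheory.lintegral_prod_symm _ hmeas.ennreal_ofReal.aemeasurable]
  have hin : ∀ t : ℝ, (∫⁻ x : EuclideanSpace ℝ (Fin n),
      ENNReal.ofReal (‖(x, t).1‖ ^ 2 * heatMVKernel n (x, t))) = ENNReal.ofReal (gFun n t) := by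
    intro t
    exact inner_lintegral n hn t
  simp_rw [hin]
  have hg_nn : 0 ≤ᵐ[volume] gFun n := by
    filter_upwards with t
    unfold gFun
    apply Set.indicator_nonneg
    intro s hs
    unfold GH
    have hlog : 0 < Real.log (1/(4*Real.pi*s)) := by
      apply Real.log_pos
      rw [lt_div_iff₀ (mul_pos (by positivity) hs.1)]
      have hsc : s < cH := hs.2
      rw [cH, lt_div_iff₀ (by positivity)] at hsc
      linarith
    have hbase : 0 ≤ 2*(n:ℝ)*s*Real.log (1/(4*Real.pi*s)) := by
      have := hs.1
      positivity
    have hv : 0 ≤ vBall n := ENNReal.toReal_nonneg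
    apply div_nonneg _ (sq_nonneg s)
    apply mul_nonneg _ (Real.rpow_nonneg hbase _)
    apply div_nonneg (mul_nonneg (Nat.cast_nonneg n) hv)
    positivity
  rw [← MeasureTheory.ofReal_integral_eq_lintegral_ofReal (gFun_integral n hn).2 hg_nn,
    (gFun_integral n hn).1]
  have hV : 0 ≤ Vfin n := by
    have hv : 0 ≤ vBall n := ENNReal.toReal_nonneg
    have hc := cH_pos
    unfold Vfin
    apply mul_nonneg
    · apply div_nonneg _ hc.le
      apply mul_nonneg _ (Real.rpow_nonneg (mul_nonneg (by positivity) hc.le) _)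
      apply div_nonneg (mul_nonneg (Nat.cast_nonneg n) hv)
      positivity
    · exact mul_nonneg (Real.rpow_nonneg (by positivity) _)
        (Real.Gamma_nonneg_of_nonneg (by positivity))
  rw [ENNReal.toReal_ofReal hV, hσ]
  have := final_alg (n:ℝ) (vBall n) (Real.Gamma (((n:ℝ)+6)/2)) hn'
  unfold Vfin cH
  convert this using 2
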